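/- arXiv:2003.12038 — 6 statements merged into one kernel-verified Lean document; each statement's English description precedes it below -/
import Mathlib

section
/- Let Λ > 0, λ_n = −Λ/n², and let (c_n)_{n≥1} be nonnegative reals with Σ_{n≥1} c_n = 1. Set μ = Σ_{n≥1} c_n δ_{λ_n}. Then for every q ∈ (0,1), D⁺_μ(q) ≤ 1/3. -/
open MeasureTheory Filter Set Topology ENNReal

noncomputable section

/-- `I_μ(q, ε) = ∫ μ(B(x,ε))^{q-1} dμ(x)`, integrated over `{x : μ(B(x,ε)) > 0}`. -/
def fracIntegral (μ : Measure ℝ) (q ε : ℝ) : ℝ≥0∞ :=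
  ∫⁻ x in {x : ℝ | 0 < μ (Ioo (x - ε) (x + ε))}, μ (Ioo (x - ε) (x + ε)) ^ (q - 1) ∂μ

/-- lower q-generalized fractal dimension. -/
def Dlower (μ : Measure ℝ) (q : ℝ) : ℝ :=
  liminf (fun ε : ℝ => Real.log (fracIntegral μ q ε).toReal / ((q - 1) * Real.log ε)) (𝓝[>] 0)

/-- upper q-generalized fractal dimension. -/
def Dupper (μ : Measure ℝ) (q : ℝ) : ℝ :=
  limsup (fun ε : ℝ => Real.log (fracIntegral μ q ε).toReal / ((q - 1) * Real.log ε)) (𝓝[>] 0)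

/-- index set of the hydrogen orbitals. -/
structure HIndex where
  n : ℕ
  l : ℕ
  m : ℤ
  hn : 1 ≤ n
  hl : l < n
  hm : -(l : ℤ) ≤ m ∧ m ≤ (l : ℤ)

instance : Fact ((1 : ℝ≥0∞) ≤ 2) := ⟨one_le_two⟩

/-- the bound-state space -/
abbrev Hspace := lp (fun _ : HIndex => ℂ) 2

/-- eigenvalues of the hydrogen Hamiltonian -/
def lam (Λ : ℝ) (n : ℕ) : ℝ := -Λ / (n : ℝ) ^ 2

/-- spectral measure of a bound state -/
def specMeasure (Λ : ℝ) (ψ : Hspace) : Measure ℝ :=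
  Measure.sum fun i : HIndex =>
    ENNReal.ofReal (‖ψ i‖ ^ 2) • Measure.dirac (lam Λ i.n)
/-!
Cut `ℝ` into the cells `[jε, (j+1)ε)`. A cell lies within `ε` of each of its points, so
`I_μ(q, ε) ≤ ∑ⱼ μ(cellⱼ)^q`, and the tangent bound `a^q ≤ s^q + s^(q-1) a` of the concave map
`a ↦ a^q` turns this into `#(occupied cells) · s^q + s^(q-1)`. The eigenvalues `λₙ`, `n ≤ N`,
occupy at most `N` cells, and all the others lie in `[λ_{N+1}, 0)`, which meets about
`Λ / (N² ε)` cells. Taking `N ≈ ε^(-1/3)` balances the two counts, and `s = ε^(1/3)` then gives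
`I_μ(q, ε) ≤ (Λ + 4) ε^((q-1)/3)`. On the other side `I_μ(q, ε) ≥ 1`, because `μ` is a probability
measure and the points `x` with `μ(B(x, ε)) = 0` form a null set.
-/

namespace ENNReal

lemma rpow_le_rpow_of_nonpos {x y : ℝ≥0∞} {z : ℝ} (hxy : x ≤ y) (hz : z ≤ 0) :
    y ^ z ≤ x ^ z := by
  simpa [rpow_neg] using ENNReal.inv_le_inv' (rpow_le_rpow hxy (neg_nonneg.2 hz))

lemma rpow_sub_one_mul_self {q : ℝ} (hq : 0 < q) {x : ℝ≥0∞} (hx : x ≠ ∞) :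
    x ^ (q - 1) * x = x ^ q := by
  rcases eq_or_ne x 0 with rfl | hx0
  · rw [mul_zero, zero_rpow_of_pos hq]
  · conv_rhs => rw [← sub_add_cancel q 1, rpow_add _ _ hx0 hx, rpow_one]

lemma rpow_le_rpow_add_rpow_sub_one_mul {q : ℝ} (hq0 : 0 < q) (hq1 : q ≤ 1) (s : ℝ≥0∞)
    {a : ℝ≥0∞} (ha : a ≠ ∞) : a ^ q ≤ s ^ q + s ^ (q - 1) * a := by
  rcases le_total a s with has | hsa
  · exact le_add_right (rpow_le_rpow has hq0.le)
  · calc a ^ q = a ^ (q - 1) * a := (rpow_sub_one_mul_self hq0 ha).symm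
      _ ≤ s ^ (q - 1) * a := mul_le_mul_left (rpow_le_rpow_of_nonpos hsa (by linarith)) a
      _ ≤ s ^ q + s ^ (q - 1) * a := le_add_self

lemma tsum_rpow_le_card_mul_add {ι : Type*} {T : ι → ℝ≥0∞} (F : Finset ι)
    (hT : ∀ j ∉ F, T j = 0) (hT_top : ∀ j, T j ≠ ∞) {q : ℝ} (hq0 : 0 < q) (hq1 : q ≤ 1)
    (s : ℝ≥0∞) : ∑' j, T j ^ q ≤ F.card * s ^ q + s ^ (q - 1) * ∑' j, T j := by
  rw [tsum_eq_sum (s := F) fun j hj => by rw [hT j hj, zero_rpow_of_pos hq0],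
    tsum_eq_sum hT, Finset.mul_sum, ← nsmul_eq_mul, ← Finset.sum_const, ← Finset.sum_add_distrib]
  exact Finset.sum_le_sum fun j _ => rpow_le_rpow_add_rpow_sub_one_mul hq0 hq1 s (hT_top j)

end ENNReal

def floorCell (ε : ℝ) (j : ℤ) : Set ℝ := (fun x => ⌊x / ε⌋) ⁻¹' {j}

lemma measurableSet_floorCell (ε : ℝ) (j : ℤ) : MeasurableSet (floorCell ε j) :=
  (Int.measurable_floor.comp (measurable_id.div_const ε)) (measurableSet_singleton j)

lemma pairwise_disjoint_floorCell (ε : ℝ) : Pairwise (Function.onFun Disjoint (floorCell ε)) :=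
  fun _ _ hij => Disjoint.preimage _ (disjoint_singleton.2 hij)

lemma iUnion_floorCell (ε : ℝ) : ⋃ j, floorCell ε j = univ :=
  eq_univ_of_forall fun _ => mem_iUnion.2 ⟨_, rfl⟩

lemma floorCell_subset_Ioo {ε : ℝ} (hε : 0 < ε) {x : ℝ} {j : ℤ} (hx : x ∈ floorCell ε j) :
    floorCell ε j ⊆ Ioo (x - ε) (x + ε) := by
  intro y hy
  have h := Int.abs_sub_lt_one_of_floor_eq_floor (hy.trans hx.symm)
  rw [← sub_div, abs_div, abs_of_pos hε, div_lt_one hε, abs_sub_lt_iff] at h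
  constructor <;> linarith

lemma fracIntegral_eq_lintegral (μ : Measure ℝ) (q : ℝ) {ε : ℝ} (hε : 0 < ε) :
    fracIntegral μ q ε = ∫⁻ x, μ (Ioo (x - ε) (x + ε)) ^ (q - 1) ∂μ := by
  rw [fracIntegral, Measure.restrict_eq_self_of_ae_mem]
  filter_upwards [μ.support_mem_ae] with x hx
  exact (μ.mem_support_iff_forall x).1 hx _ (Ioo_mem_nhds (by linarith) (by linarith))

lemma one_le_fracIntegral (μ : Measure ℝ) [IsProbabilityMeasure μ] {q : ℝ} (hq : q ≤ 1)
    {ε : ℝ} (hε : 0 < ε) : 1 ≤ fracIntegral μ q ε := by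
  rw [fracIntegral_eq_lintegral μ q hε, ← measure_univ (μ := μ), ← lintegral_one]
  refine lintegral_mono fun _ => ?_
  rw [← one_rpow (q - 1)]
  exact ENNReal.rpow_le_rpow_of_nonpos prob_le_one (by linarith)

lemma fracIntegral_le_tsum_rpow_floorCell (μ : Measure ℝ) [IsFiniteMeasure μ] {q ε : ℝ}
    (hq0 : 0 < q) (hq1 : q ≤ 1) (hε : 0 < ε) :
    fracIntegral μ q ε ≤ ∑' j, μ (floorCell ε j) ^ q := by
  rw [fracIntegral_eq_lintegral μ q hε, ← setLIntegral_univ, ← iUnion_floorCell ε,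
    lintegral_iUnion (measurableSet_floorCell ε) (pairwise_disjoint_floorCell ε)]
  refine ENNReal.tsum_le_tsum fun j => ?_
  calc ∫⁻ x in floorCell ε j, μ (Ioo (x - ε) (x + ε)) ^ (q - 1) ∂μ
      ≤ ∫⁻ _ in floorCell ε j, μ (floorCell ε j) ^ (q - 1) ∂μ :=
        setLIntegral_mono' (measurableSet_floorCell ε j) fun x hx =>
          ENNReal.rpow_le_rpow_of_nonpos (measure_mono (floorCell_subset_Ioo hε hx))
            (by linarith)
    _ = μ (floorCell ε j) ^ q := by
        rw [setLIntegral_const, ENNReal.rpow_sub_one_mul_self hq0 (measure_ne_top _ _)]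

lemma fracIntegral_le_card_mul_add (μ : Measure ℝ) [IsFiniteMeasure μ] {q ε : ℝ}
    (hq0 : 0 < q) (hq1 : q ≤ 1) (hε : 0 < ε) (F : Finset ℤ)
    (hF : ∀ j ∉ F, μ (floorCell ε j) = 0) (s : ℝ≥0∞) :
    fracIntegral μ q ε ≤ F.card * s ^ q + s ^ (q - 1) * μ univ := by
  have hμ : ∑' j, μ (floorCell ε j) = μ univ := by
    rw [← measure_iUnion (pairwise_disjoint_floorCell ε) (measurableSet_floorCell ε),
      iUnion_floorCell]
  calc fracIntegral μ q ε ≤ ∑' j, μ (floorCell ε j) ^ q :=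
        fracIntegral_le_tsum_rpow_floorCell μ hq0 hq1 hε
    _ ≤ F.card * s ^ q + s ^ (q - 1) * μ univ := by
        rw [← hμ]
        exact ENNReal.tsum_rpow_le_card_mul_add F hF (fun _ => measure_ne_top _ _) hq0 hq1 s

lemma exists_finset_floor_div_mem_card_le {p : ℕ → ℝ} (hp : Monotone p) (hneg : ∀ n, p n < 0)
    {ε : ℝ} (hε : 0 < ε) (N : ℕ) :
    ∃ F : Finset ℤ, (∀ n, ⌊p n / ε⌋ ∈ F) ∧ (F.card : ℝ) ≤ N + -p N / ε + 1 := by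
  set k : ℕ → ℤ := fun n => ⌊p n / ε⌋
  have hk_neg : ∀ n, k n < 0 := fun n => Int.floor_lt.2 (by
    push_cast; exact div_neg_of_neg_of_pos (hneg n) hε)
  refine ⟨(Finset.range N).image k ∪ Finset.Icc (k N) (-1), fun n => ?_, ?_⟩
  · rcases lt_or_ge n N with hn | hn
    · exact Finset.mem_union_left _ (Finset.mem_image_of_mem k (Finset.mem_range.2 hn))
    · refine Finset.mem_union_right _ (Finset.mem_Icc.2 ⟨?_, by linarith [hk_neg n]⟩)
      exact Int.floor_mono (div_le_div_of_nonneg_right (hp hn) hε.le)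
  · have h_image : (((Finset.range N).image k).card : ℝ) ≤ N := by
      exact_mod_cast (Finset.card_image_le).trans (Finset.card_range N).le
    have h_Icc : ((Finset.Icc (k N) (-1)).card : ℝ) = -k N := by
      rw [Int.card_Icc, neg_add_cancel, zero_sub, ← Int.cast_natCast,
        Int.toNat_of_nonneg (by linarith [hk_neg N]), Int.cast_neg]
    have h_kN : (-k N : ℝ) ≤ -p N / ε + 1 := by
      linarith [Int.sub_one_lt_floor (p N / ε), neg_div ε (p N)]
    calc ((_ ∪ _ : Finset ℤ).card : ℝ)
        ≤ ((Finset.range N).image k).card + (Finset.Icc (k N) (-1)).card := by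
          exact_mod_cast Finset.card_union_le _ _
      _ ≤ N + -p N / ε + 1 := by rw [h_Icc]; linarith

lemma lam_neg {Λ : ℝ} (hΛ : 0 < Λ) {n : ℕ} (hn : 0 < n) : lam Λ n < 0 :=
  div_neg_of_neg_of_pos (neg_neg_of_pos hΛ) (by positivity)

lemma monotone_lam_succ {Λ : ℝ} (hΛ : 0 ≤ Λ) : Monotone fun n : ℕ => lam Λ (n + 1) := by
  intro m n hmn
  simp only [lam, neg_div]
  gcongr

lemma natCeil_inv_add_neg_lam_div_le {Λ t : ℝ} (hΛ : 0 ≤ Λ) (ht0 : 0 < t) (ht1 : t ≤ 1) :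
    (⌈t⁻¹⌉₊ : ℝ) + -lam Λ (⌈t⁻¹⌉₊ + 1) / t ^ 3 + 1 ≤ (Λ + 3) / t := by
  set N := ⌈t⁻¹⌉₊
  have hN_le : (N : ℝ) ≤ t⁻¹ + 1 := (Nat.ceil_lt_add_one (by positivity)).le
  have hN_ge : 1 ≤ ((N : ℝ) + 1) * t :=
    calc 1 = t⁻¹ * t := (inv_mul_cancel₀ ht0.ne').symm
      _ ≤ ((N : ℝ) + 1) * t := by gcongr; linarith [Nat.le_ceil t⁻¹]
  have h_tail : -lam Λ (N + 1) / t ^ 3 ≤ Λ / t := by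
    have h_eq : -lam Λ (N + 1) / t ^ 3 = Λ / t / (((N : ℝ) + 1) * t) ^ 2 := by
      simp only [lam]; push_cast; field_simp
    rw [h_eq]
    exact div_le_self (by positivity) (one_le_pow₀ hN_ge)
  have h_one : 1 ≤ t⁻¹ := one_le_inv₀ ht0 |>.2 ht1
  rw [add_div, div_eq_mul_inv 3]
  linarith

lemma sum_smul_dirac_apply_eq_zero {α ι : Type*} [MeasurableSpace α]
    [MeasurableSingletonClass α] [Countable ι] (w : ι → ℝ≥0∞) {p : ι → α} {s : Set α}
    (hs : ∀ i, p i ∉ s) : (Measure.sum fun i => w i • Measure.dirac (p i)) s = 0 := by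
  simp [Measure.sum_apply_of_countable, Measure.dirac_apply, hs]

lemma isProbabilityMeasure_sum_smul_dirac {α ι : Type*} [MeasurableSpace α] [Countable ι]
    {w : ι → ℝ≥0∞} (hw : ∑' i, w i = 1) (p : ι → α) :
    IsProbabilityMeasure (Measure.sum fun i => w i • Measure.dirac (p i)) :=
  ⟨by simp [Measure.sum_apply _ MeasurableSet.univ, hw]⟩

lemma fracIntegral_sum_smul_dirac_lam_le {Λ : ℝ} (hΛ : 0 < Λ) {w : ℕ → ℝ≥0∞}
    (hw : ∑' n, w n = 1) {q : ℝ} (hq0 : 0 < q) (hq1 : q ≤ 1) {ε : ℝ} (hε0 : 0 < ε)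
    (hε1 : ε ≤ 1) :
    fracIntegral (Measure.sum fun n => w n • Measure.dirac (lam Λ (n + 1))) q ε ≤
      ENNReal.ofReal ((Λ + 4) * ε ^ (1 / 3 * (q - 1))) := by
  set μ := Measure.sum fun n => w n • Measure.dirac (lam Λ (n + 1))
  have := isProbabilityMeasure_sum_smul_dirac hw fun n => lam Λ (n + 1)
  obtain ⟨t, ht0, ht1, rfl⟩ : ∃ t, 0 < t ∧ t ≤ 1 ∧ t ^ 3 = ε :=
    ⟨ε ^ (1 / 3 : ℝ), by positivity, Real.rpow_le_one hε0.le hε1 (by norm_num), by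
      rw [← Real.rpow_natCast, ← Real.rpow_mul hε0.le]; norm_num⟩
  obtain ⟨F, hF, hcard⟩ := exists_finset_floor_div_mem_card_le (monotone_lam_succ hΛ.le)
    (fun n => lam_neg hΛ n.succ_pos) hε0 ⌈t⁻¹⌉₊
  replace hcard := hcard.trans (natCeil_inv_add_neg_lam_div_le hΛ.le ht0 ht1)
  have hcell : ∀ j ∉ F, μ (floorCell (t ^ 3) j) = 0 := fun j hj =>
    sum_smul_dirac_apply_eq_zero w fun n hn => hj (hn ▸ hF n)
  have h_tq : t ^ q = t ^ (q - 1) * t := by rw [← Real.rpow_add_one ht0.ne']; ring_nf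
  calc fracIntegral μ q (t ^ 3)
      ≤ F.card * ENNReal.ofReal t ^ q + ENNReal.ofReal t ^ (q - 1) * μ univ :=
        fracIntegral_le_card_mul_add μ hq0 hq1 hε0 F hcell _
    _ = ENNReal.ofReal (F.card * t ^ q + t ^ (q - 1)) := by
        rw [measure_univ, mul_one, ENNReal.ofReal_rpow_of_pos ht0,
          ENNReal.ofReal_rpow_of_pos ht0, ENNReal.ofReal_add (by positivity) (by positivity),
          ENNReal.ofReal_mul (by positivity), ENNReal.ofReal_natCast]
    _ ≤ ENNReal.ofReal ((Λ + 4) * t ^ (q - 1)) := by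
        refine ENNReal.ofReal_le_ofReal ?_
        have h := mul_le_mul_of_nonneg_right hcard (by positivity : 0 ≤ t ^ q)
        rw [h_tq, div_mul_eq_mul_div, mul_div_assoc, mul_div_cancel_right₀ _ ht0.ne'] at h
        rw [h_tq]
        linarith
    _ = ENNReal.ofReal ((Λ + 4) * (t ^ 3) ^ (1 / 3 * (q - 1))) := by
        rw [Real.rpow_mul (by positivity), ← Real.rpow_natCast, ← Real.rpow_mul ht0.le]
        norm_num

lemma Dupper_le_of_fracIntegral_le {μ : Measure ℝ} [IsProbabilityMeasure μ] {q C d : ℝ}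
    (hq : q < 1) (hC : 0 < C)
    (h : ∀ᶠ ε in 𝓝[>] 0, fracIntegral μ q ε ≤ ENNReal.ofReal (C * ε ^ (d * (q - 1)))) :
    Dupper μ q ≤ d := by
  have hD : Tendsto (fun ε : ℝ => (q - 1) * Real.log ε) (𝓝[>] 0) atTop :=
    Real.tendsto_log_nhdsGT_zero.const_mul_atBot_of_neg (by linarith)
  have hbounds : ∀ᶠ ε in 𝓝[>] 0,
      0 ≤ Real.log (fracIntegral μ q ε).toReal / ((q - 1) * Real.log ε) ∧
      Real.log (fracIntegral μ q ε).toReal / ((q - 1) * Real.log ε) ≤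
        d + Real.log C / ((q - 1) * Real.log ε) := by
    filter_upwards [h, hD.eventually_gt_atTop 0, self_mem_nhdsWithin] with ε hI hDε hε
    have hε : 0 < ε := hε
    have hI_one : 1 ≤ (fracIntegral μ q ε).toReal := by
      simpa using ENNReal.toReal_mono (ne_top_of_le_ne_top ENNReal.ofReal_ne_top hI)
        (one_le_fracIntegral μ hq.le hε)
    have hlog : Real.log (fracIntegral μ q ε).toReal ≤
        Real.log C + d * ((q - 1) * Real.log ε) := by
      calc Real.log (fracIntegral μ q ε).toReal ≤ Real.log (C * ε ^ (d * (q - 1))) :=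
            Real.log_le_log (by linarith) (ENNReal.toReal_le_of_le_ofReal (by positivity) hI)
        _ = Real.log C + d * ((q - 1) * Real.log ε) := by
            rw [Real.log_mul hC.ne' (by positivity), Real.log_rpow hε]; ring
    refine ⟨div_nonneg (Real.log_nonneg hI_one) hDε.le, ?_⟩
    rw [div_le_iff₀ hDε, add_mul, div_mul_cancel₀ _ hDε.ne']
    linarith
  have hlim : Tendsto (fun ε : ℝ => d + Real.log C / ((q - 1) * Real.log ε)) (𝓝[>] 0) (𝓝 d) := by
    simpa using tendsto_const_nhds.add (tendsto_const_nhds.div_atTop hD)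
  calc Dupper μ q ≤ limsup (fun ε : ℝ => d + Real.log C / ((q - 1) * Real.log ε)) (𝓝[>] 0) :=
        limsup_le_limsup (hbounds.mono fun _ h => h.2)
          (isCoboundedUnder_le_of_eventually_le _ (hbounds.mono fun _ h => h.1))
          hlim.isBoundedUnder_le
    _ = d := hlim.limsup_eq

theorem hydrogen_pp_upper_dimension_le_third (Λ : ℝ) (hΛ : 0 < Λ)
    (c : ℕ → ℝ) (hc : ∀ n, 0 ≤ c n) (hsum : ∑' n : ℕ, c (n + 1) = 1)
    (μ : Measure ℝ)
    (hμ : μ = Measure.sum fun n : ℕ =>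
      ENNReal.ofReal (c (n + 1)) • Measure.dirac (lam Λ (n + 1))) :
    ∀ q ∈ Ioo (0 : ℝ) 1, Dupper μ q ≤ 1 / 3 := by
  rintro q ⟨hq0, hq1⟩
  have hsummable : Summable fun n => c (n + 1) := by
    by_contra h
    exact zero_ne_one ((tsum_eq_zero_of_not_summable h).symm.trans hsum)
  have hw : ∑' n, ENNReal.ofReal (c (n + 1)) = 1 := by
    rw [← ENNReal.ofReal_tsum_of_nonneg (fun n => hc _) hsummable, hsum, ENNReal.ofReal_one]
  subst hμ
  have := isProbabilityMeasure_sum_smul_dirac hw fun n => lam Λ (n + 1)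
  refine Dupper_le_of_fracIntegral_le (C := Λ + 4) hq1 (by linarith) ?_
  filter_upwards [Ioc_mem_nhdsGT zero_lt_one] with ε hε
  exact fracIntegral_sum_smul_dirac_lam_le hΛ hw hq0 hq1.le hε.1 hε.2
end
end

section
/- Let (x_n)_{n≥1} be a sequence of distinct real numbers, let (c_n)_{n≥1} be nonnegative reals with 0 < Σ_{n≥1} c_n < ∞, and let μ = Σ_{n≥1} c_n δ_{x_n}. If q ∈ (0,1) and Σ_{n≥1} (c_n)^q < ∞, then D⁻_μ(q) = 0. -/
/-!
For `q < 1` the map `r ↦ r ^ (q - 1)` is antitone, so the integrand `μ(B(y, ε)) ^ (q - 1)` lies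
between `μ(ℝ) ^ (q - 1)` and `μ{y} ^ (q - 1)`. Hence, uniformly in `ε`, `I_μ(q, ε)` is at least
`c_n μ(ℝ) ^ (q - 1) > 0` for any `c_n > 0`, and at most
`∫ μ{y} ^ (q - 1) dμ ≤ Σ c_n c_n ^ (q - 1) = Σ c_n ^ q < ∞`.
So `ln I_μ(q, ε)` stays bounded while `(q - 1) ln ε → +∞`, and the quotient tends to `0`.
-/

open MeasureTheory Filter Set Topology ENNReal

noncomputable section

namespace ENNReal

lemma rpow_le_rpow_of_nonpos_s9 {a b : ℝ≥0∞} {z : ℝ} (hab : a ≤ b) (hz : z ≤ 0) :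
    b ^ z ≤ a ^ z := by
  rw [← neg_neg z, rpow_neg b, rpow_neg a, ENNReal.inv_le_inv]
  exact rpow_le_rpow hab (neg_nonneg.2 hz)

lemma mul_rpow_sub_one_le {a b : ℝ≥0∞} {q : ℝ} (hab : a ≤ b) (ha : a ≠ ⊤) (hq : q ≤ 1) :
    a * b ^ (q - 1) ≤ a ^ q := by
  rcases eq_or_ne a 0 with rfl | ha0
  · simp
  calc a * b ^ (q - 1) ≤ a ^ (1 : ℝ) * a ^ (q - 1) := by
        rw [rpow_one]
        gcongr a * ?_
        exact rpow_le_rpow_of_nonpos_s9 hab (by linarith)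
    _ = a ^ q := by rw [← rpow_add _ _ ha0 ha]; norm_num

end ENNReal

section fracIntegral

variable (μ : Measure ℝ) {q ε : ℝ}

lemma fracIntegral_le_lintegral_measure_singleton_rpow (hq : q ≤ 1) (hε : 0 < ε) :
    fracIntegral μ q ε ≤ ∫⁻ y, μ {y} ^ (q - 1) ∂μ :=
  (setLIntegral_le_lintegral _ _).trans <| lintegral_mono fun y =>
    ENNReal.rpow_le_rpow_of_nonpos_s9
      (measure_mono (singleton_subset_iff.2 ⟨by linarith, by linarith⟩)) (by linarith)

lemma measure_singleton_mul_rpow_le_fracIntegral (hq : q ≤ 1) (hε : 0 < ε) (a : ℝ) :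
    μ {a} * μ univ ^ (q - 1) ≤ fracIntegral μ q ε := by
  have hball : μ {a} ≤ μ (Ioo (a - ε) (a + ε)) :=
    measure_mono (singleton_subset_iff.2 ⟨by linarith, by linarith⟩)
  rcases eq_or_ne (μ {a}) 0 with ha | ha
  · simp [ha]
  calc μ {a} * μ univ ^ (q - 1) ≤ μ (Ioo (a - ε) (a + ε)) ^ (q - 1) * μ {a} := by
        rw [mul_comm]
        gcongr ?_ * _
        exact ENNReal.rpow_le_rpow_of_nonpos_s9 (measure_mono (subset_univ _)) (by linarith)
    _ = ∫⁻ y in {a}, μ (Ioo (y - ε) (y + ε)) ^ (q - 1) ∂μ :=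
        (lintegral_singleton (fun y => μ (Ioo (y - ε) (y + ε)) ^ (q - 1)) a).symm
    _ ≤ fracIntegral μ q ε :=
        lintegral_mono_set (singleton_subset_iff.2 ((pos_iff_ne_zero.2 ha).trans_le hball))

variable {μ}

lemma Dlower_eq_zero_of_fracIntegral_bounded (hq : q < 1) {a b : ℝ≥0∞} (ha : 0 < a)
    (hb : b ≠ ⊤) (hbounds : ∀ᶠ ε in 𝓝[>] 0, fracIntegral μ q ε ∈ Icc a b) :
    Dlower μ q = 0 := by
  obtain ⟨ε₀, hε₀⟩ := hbounds.exists
  have ha' : 0 < a.toReal :=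
    ENNReal.toReal_pos ha.ne' (ne_top_of_le_ne_top hb (hε₀.1.trans hε₀.2))
  have hlog_bounded : IsBoundedUnder (· ≤ ·) (𝓝[>] 0)
      ((‖·‖) ∘ fun ε => Real.log (fracIntegral μ q ε).toReal) := by
    simp only [Function.comp_def, Real.norm_eq_abs]
    refine isBoundedUnder_le_abs.2 ⟨isBoundedUnder_of_eventually_le (a := Real.log b.toReal)
      (hbounds.mono fun ε hε => ?_), isBoundedUnder_of_eventually_ge (a := Real.log a.toReal)
      (hbounds.mono fun ε hε => ?_)⟩
    all_goals have hI : a.toReal ≤ (fracIntegral μ q ε).toReal :=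
      ENNReal.toReal_mono (ne_top_of_le_ne_top hb hε.2) hε.1
    · exact Real.log_le_log (ha'.trans_le hI) (ENNReal.toReal_mono hb hε.2)
    · exact Real.log_le_log ha' hI
  have hden : Tendsto (fun ε : ℝ => (q - 1) * Real.log ε) (𝓝[>] 0) atTop :=
    (tendsto_const_mul_atTop_of_neg (by linarith)).2 Real.tendsto_log_nhdsGT_zero
  refine Tendsto.liminf_eq ?_
  simpa only [div_eq_inv_mul, Function.comp_def] using
    (tendsto_inv_atTop_zero.comp hden).zero_mul_isBoundedUnder_le hlog_bounded

end fracIntegral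

section atomicMeasure

variable {ι α : Type*} [MeasurableSpace α] (x : ι → α) (w : ι → ℝ≥0∞)

def atomicMeasure : Measure α :=
  Measure.sum fun i => w i • Measure.dirac (x i)

lemma atomicMeasure_apply_univ : atomicMeasure x w univ = ∑' i, w i := by
  simp [atomicMeasure, Measure.sum_apply _ MeasurableSet.univ]

lemma le_atomicMeasure_singleton [MeasurableSingletonClass α] (i : ι) :
    w i ≤ atomicMeasure x w {x i} := by
  calc w i = (w i • Measure.dirac (x i)) {x i} := by simp
    _ ≤ atomicMeasure x w {x i} := Measure.le_sum _ i _

lemma lintegral_atomicMeasure [MeasurableSingletonClass α] (f : α → ℝ≥0∞) :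
    ∫⁻ y, f y ∂atomicMeasure x w = ∑' i, w i * f (x i) := by
  simp [atomicMeasure, lintegral_sum_measure]

lemma lintegral_atomicMeasure_singleton_rpow_le [MeasurableSingletonClass α]
    (hw : ∀ i, w i ≠ ⊤) {q : ℝ} (hq : q ≤ 1) :
    ∫⁻ y, atomicMeasure x w {y} ^ (q - 1) ∂atomicMeasure x w ≤ ∑' i, w i ^ q := by
  rw [lintegral_atomicMeasure]
  exact ENNReal.tsum_le_tsum fun i =>
    ENNReal.mul_rpow_sub_one_le (le_atomicMeasure_singleton x w i) (hw i) hq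

end atomicMeasure

theorem lower_dimension_zero_of_summable_rpow_general
    (x : ℕ → ℝ)
    (c : ℕ → ℝ) (hc : ∀ n, 0 ≤ c n) (hsc : Summable c) (hpos : 0 < ∑' n, c n)
    (μ : Measure ℝ)
    (hμ : μ = Measure.sum fun n : ℕ => ENNReal.ofReal (c n) • Measure.dirac (x n))
    (q : ℝ) (hq : q ∈ Ioo (0 : ℝ) 1)
    (hsq : Summable fun n => c n ^ q) :
    Dlower μ q = 0 := by
  set w : ℕ → ℝ≥0∞ := fun n => ENNReal.ofReal (c n)
  replace hμ : μ = atomicMeasure x w := hμ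
  have hμ_univ : μ univ = ENNReal.ofReal (∑' n, c n) := by
    rw [hμ, atomicMeasure_apply_univ, ENNReal.ofReal_tsum_of_nonneg hc hsc]
  have hw_rpow : ∑' n, w n ^ q ≠ ⊤ := by
    simp only [w, ENNReal.ofReal_rpow_of_nonneg (hc _) hq.1.le,
      ← ENNReal.ofReal_tsum_of_nonneg (fun n => Real.rpow_nonneg (hc n) q) hsq]
    exact ENNReal.ofReal_ne_top
  obtain ⟨n, hn⟩ : ∃ n, w n ≠ 0 := by
    by_contra! h
    rw [hμ, atomicMeasure_apply_univ, ENNReal.tsum_eq_zero.2 h] at hμ_univ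
    exact (ENNReal.ofReal_pos.2 hpos).ne hμ_univ
  have hμ_univ_rpow_pos : 0 < μ univ ^ (q - 1) :=
    ENNReal.rpow_pos (hμ_univ ▸ ENNReal.ofReal_pos.2 hpos) (hμ_univ ▸ ENNReal.ofReal_ne_top)
  refine Dlower_eq_zero_of_fracIntegral_bounded hq.2
    (ENNReal.mul_pos hn hμ_univ_rpow_pos.ne') hw_rpow ?_
  filter_upwards [self_mem_nhdsWithin] with ε hε
  constructor
  · calc w n * μ univ ^ (q - 1) ≤ μ {x n} * μ univ ^ (q - 1) := by
          gcongr; exact hμ ▸ le_atomicMeasure_singleton x w n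
      _ ≤ fracIntegral μ q ε := measure_singleton_mul_rpow_le_fracIntegral μ hq.2.le hε _
  · calc fracIntegral μ q ε ≤ ∫⁻ y, μ {y} ^ (q - 1) ∂μ :=
          fracIntegral_le_lintegral_measure_singleton_rpow μ hq.2.le hε
      _ ≤ ∑' n, w n ^ q := hμ ▸ lintegral_atomicMeasure_singleton_rpow_le x w
          (fun _ => ENNReal.ofReal_ne_top) hq.2.le

theorem lower_dimension_zero_of_summable_rpow
    (x : ℕ → ℝ) (hx : Function.Injective x)
    (c : ℕ → ℝ) (hc : ∀ n, 0 ≤ c n) (hsc : Summable c) (hpos : 0 < ∑' n, c n)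
    (μ : Measure ℝ)
    (hμ : μ = Measure.sum fun n : ℕ => ENNReal.ofReal (c n) • Measure.dirac (x n))
    (q : ℝ) (hq : q ∈ Ioo (0 : ℝ) 1)
    (hsq : Summable fun n => c n ^ q) :
    Dlower μ q = 0 :=
  lower_dimension_zero_of_summable_rpow_general x c hc hsc hpos μ hμ q hq hsq
end
end

section
/- Let (x_n)_{n≥1} be a sequence of distinct real numbers, let (c_n)_{n≥1} be nonnegative reals with Σ_{n≥1} c_n < ∞, and let μ = Σ_{n≥1} c_n δ_{x_n}. Then for every q ∈ (0,1) and every ε > 0, I_μ(q,ε) ≤ Σ_{n≥1} (c_n)^q, where both sides are allowed to take the value +∞. -/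
open MeasureTheory Filter Set Topology ENNReal

noncomputable section

/-!
The atom `x n` lies in its own ball, so `μ (B (x n) ε) ≥ c n`; since `q - 1 ≤ 0`, the atom
contributes `c n * μ (B (x n) ε) ^ (q - 1) ≤ c n * c n ^ (q - 1) = c n ^ q` to the integral.
-/

theorem ENNReal.rpow_le_rpow_of_nonpos_s10 {a b : ℝ≥0∞} {z : ℝ} (hab : a ≤ b) (hz : z ≤ 0) :
    b ^ z ≤ a ^ z := by
  simpa [ENNReal.rpow_neg] using
    ENNReal.inv_le_inv.mpr (ENNReal.rpow_le_rpow hab (neg_nonneg.mpr hz))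

theorem ENNReal.mul_rpow_sub_one_le_rpow {a b : ℝ≥0∞} {q : ℝ} (ha : a ≠ ⊤) (hab : a ≤ b)
    (hq0 : 0 < q) (hq1 : q ≤ 1) : a * b ^ (q - 1) ≤ a ^ q :=
  calc a * b ^ (q - 1) ≤ a ^ (1 : ℝ) * a ^ (q - 1) := by
        rw [ENNReal.rpow_one]
        exact mul_le_mul_right (ENNReal.rpow_le_rpow_of_nonpos_s10 hab (by linarith)) a
    _ = a ^ q := by rw [← ENNReal.rpow_add_of_add_pos ha 1 (q - 1) (by linarith), add_sub_cancel]

theorem lintegral_rpow_sub_one_sum_dirac_le {α ι : Type*} [MeasurableSpace α]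
    [MeasurableSingletonClass α] (a : ι → ℝ≥0∞) (ha : ∀ i, a i ≠ ⊤) (x : ι → α)
    (B : α → Set α) (hB : ∀ y, y ∈ B y) {q : ℝ} (hq0 : 0 < q) (hq1 : q ≤ 1) :
    ∫⁻ y, (Measure.sum fun i => a i • Measure.dirac (x i)) (B y) ^ (q - 1)
        ∂(Measure.sum fun i => a i • Measure.dirac (x i)) ≤ ∑' i, a i ^ q := by
  set μ := Measure.sum fun i => a i • Measure.dirac (x i)
  have hatom : ∀ i, a i ≤ μ (B (x i)) := fun i =>
    calc a i = (a i • Measure.dirac (x i)) (B (x i)) := by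
          rw [Measure.smul_apply, Measure.dirac_apply_of_mem (hB _), smul_eq_mul, mul_one]
      _ ≤ μ (B (x i)) := Measure.le_sum _ i _
  rw [lintegral_sum_measure]
  refine ENNReal.tsum_le_tsum fun i => ?_
  rw [lintegral_smul_measure, lintegral_dirac]
  exact ENNReal.mul_rpow_sub_one_le_rpow (ha i) (hatom i) hq0 hq1

theorem fracIntegral_le_tsum_rpow_general
    (x : ℕ → ℝ)
    (c : ℕ → ℝ)
    (μ : Measure ℝ)
    (hμ : μ = Measure.sum fun n : ℕ => ENNReal.ofReal (c n) • Measure.dirac (x n))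
    (q : ℝ) (hq : q ∈ Ioo (0 : ℝ) 1) (ε : ℝ) (hε : 0 < ε) :
    fracIntegral μ q ε ≤ ∑' n : ℕ, ENNReal.ofReal (c n) ^ q := by
  subst hμ
  exact (setLIntegral_le_lintegral _ _).trans <|
    lintegral_rpow_sub_one_sum_dirac_le _ (fun _ => ofReal_ne_top) x
      (fun y => Ioo (y - ε) (y + ε)) (fun y => ⟨by linarith, by linarith⟩) hq.1 hq.2.le

theorem fracIntegral_le_tsum_rpow
    (x : ℕ → ℝ) (hx : Function.Injective x)
    (c : ℕ → ℝ) (hc : ∀ n, 0 ≤ c n) (hsc : Summable c)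
    (μ : Measure ℝ)
    (hμ : μ = Measure.sum fun n : ℕ => ENNReal.ofReal (c n) • Measure.dirac (x n))
    (q : ℝ) (hq : q ∈ Ioo (0 : ℝ) 1) (ε : ℝ) (hε : 0 < ε) :
    fracIntegral μ q ε ≤ ∑' n : ℕ, ENNReal.ofReal (c n) ^ q :=
  fracIntegral_le_tsum_rpow_general x c μ hμ q hq ε hε
end
end

section
/- For every ψ ∈ 𝓗 and every δ > 0, there exists φ ∈ 𝓗 with ‖ψ − φ‖ < δ such that D⁻_{μ_φ}(q) = 0 for all q ∈ (0,1). In particular, for each q ∈ (0,1) the set {ψ ∈ 𝓗 : D⁻_{μ_ψ}(q) = 0} is dense in 𝓗. -/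
open MeasureTheory Filter Set Topology ENNReal

noncomputable section

/-!
Finitely supported states are dense in `ℓ²`, and the spectral measure of such a state is a finite
combination of Dirac masses. Once `ε` is below the minimal gap between its atoms, the ball `B(x, ε)`
around an atom carries exactly the mass of `{x}`, so `I_μ(q, ε)` no longer depends on `ε`, while
`|(q - 1) ln ε| → ∞`: the ratio defining the dimension tends to `0`.
-/

lemma lp.dense_setOf_finite_support {α : Type*} {E : α → Type*} [∀ i, NormedAddCommGroup (E i)]
    {p : ℝ≥0∞} [Fact (1 ≤ p)] (hp : p ≠ ⊤) :
    Dense {f : lp E p | ∃ s : Finset α, ∀ i ∉ s, f i = 0} := by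
  classical
  refine fun f ↦ mem_closure_of_tendsto (lp.hasSum_single hp f) (Eventually.of_forall fun s ↦ ?_)
  refine ⟨s, fun i hi ↦ ?_⟩
  rw [lp.coeFn_sum, Finset.sum_apply]
  exact Finset.sum_eq_zero fun j hj ↦ lp.single_apply_ne p j _ fun hij ↦ hi (hij ▸ hj)

lemma Set.Finite.eventually_le_abs_sub_of_ne {S : Set ℝ} (hS : S.Finite) :
    ∀ᶠ ε in 𝓝[>] (0 : ℝ), ∀ x ∈ S, ∀ y ∈ S, x ≠ y → ε ≤ |x - y| := by
  rw [eventually_all_finite hS]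
  intro x _
  rw [eventually_all_finite hS]
  intro y _
  rcases eq_or_ne x y with rfl | hxy
  · exact Eventually.of_forall fun _ h ↦ (h rfl).elim
  · exact ((eventually_le_nhds (abs_sub_pos.2 hxy)).filter_mono nhdsWithin_le_nhds).mono
      fun _ hε _ ↦ hε

lemma Dlower_eq_zero_of_eventually_fracIntegral_eq {μ : Measure ℝ} {q : ℝ} {c : ℝ≥0∞}
    (h : ∀ᶠ ε in 𝓝[>] (0 : ℝ), fracIntegral μ q ε = c) : Dlower μ q = 0 := by
  have hlim : Tendsto (fun ε ↦ (q - 1)⁻¹ * (Real.log c.toReal / Real.log ε)) (𝓝[>] 0) (𝓝 0) := by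
    simpa using (tendsto_const_nhds.div_atBot Real.tendsto_log_nhdsGT_zero).const_mul (q - 1)⁻¹
  refine (hlim.congr' ?_).liminf_eq
  filter_upwards [h] with ε hε
  rw [hε, div_mul_eq_div_div_swap, inv_mul_eq_div]

lemma measure_Ioo_eq_measure_singleton {μ : Measure ℝ} {S : Set ℝ} (hS : μ Sᶜ = 0)
    {ε x : ℝ} (hε : 0 < ε) (hsep : ∀ y ∈ S, x ≠ y → ε ≤ |x - y|) :
    μ (Ioo (x - ε) (x + ε)) = μ {x} := by
  refine le_antisymm ?_ (measure_mono (by simpa using hε))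
  rw [← measure_inter_conull hS]
  refine measure_mono fun y ⟨hyB, hyS⟩ ↦ ?_
  by_contra hxy
  rw [mem_Ioo] at hyB
  exact (hsep y hyS (Ne.symm hxy)).not_gt (abs_sub_lt_iff.2 ⟨by linarith, by linarith⟩)

lemma eventually_fracIntegral_eq_of_measure_compl_eq_zero {μ : Measure ℝ} {S : Set ℝ}
    (hSfin : S.Finite) (hS : μ Sᶜ = 0) (q : ℝ) : ∀ᶠ ε in 𝓝[>] (0 : ℝ),
      fracIntegral μ q ε = ∫⁻ x in {x ∈ S | 0 < μ {x}}, μ {x} ^ (q - 1) ∂μ := by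
  filter_upwards [self_mem_nhdsWithin, hSfin.eventually_le_abs_sub_of_ne] with ε hε hsep
  have hball : ∀ x ∈ S, μ (Ioo (x - ε) (x + ε)) = μ {x} := fun x hx ↦
    measure_Ioo_eq_measure_singleton hS hε (hsep x hx)
  have hset : {x | 0 < μ (Ioo (x - ε) (x + ε))} ∩ S = {x ∈ S | 0 < μ {x}} := by
    ext x
    simp only [mem_inter_iff, mem_ofPred_eq]
    exact and_comm.trans (and_congr_right fun hx ↦ by rw [hball x hx])
  rw [fracIntegral,
    ← Measure.restrict_congr_set (inter_ae_eq_left_of_ae_eq_univ (ae_eq_univ.2 hS)), hset]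
  exact setLIntegral_congr_fun (hSfin.subset (sep_subset _ _)).measurableSet
    fun x ⟨hx, _⟩ ↦ by rw [hball x hx]

lemma Measure.sum_smul_dirac_compl_image_eq_zero {ι α : Type*} [MeasurableSpace α]
    [MeasurableSingletonClass α] {w : ι → ℝ≥0∞} {x : ι → α} {t : Finset ι}
    (hw : ∀ i ∉ t, w i = 0) : Measure.sum (fun i ↦ w i • Measure.dirac (x i)) (x '' t)ᶜ = 0 := by
  rw [Measure.sum_apply _ (t.finite_toSet.image x).measurableSet.compl, ENNReal.tsum_eq_zero]
  intro i
  by_cases hi : i ∈ t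
  · simp [Measure.dirac_apply' _ (t.finite_toSet.image x).measurableSet.compl,
      mem_image_of_mem x (Finset.mem_coe.2 hi)]
  · simp [hw i hi]

lemma Dlower_specMeasure_eq_zero_of_finite_support (Λ : ℝ) {φ : Hspace} {t : Finset HIndex}
    (ht : ∀ i ∉ t, φ i = 0) (q : ℝ) : Dlower (specMeasure Λ φ) q = 0 :=
  Dlower_eq_zero_of_eventually_fracIntegral_eq <|
    eventually_fracIntegral_eq_of_measure_compl_eq_zero (t.finite_toSet.image _)
      (Measure.sum_smul_dirac_compl_image_eq_zero fun i hi ↦ by simp [ht i hi]) q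

theorem dense_lower_dimension_zero_general (Λ : ℝ) :
    (∀ ψ : Hspace, ∀ δ > (0 : ℝ), ∃ φ : Hspace,
        ‖ψ - φ‖ < δ ∧ ∀ q ∈ Ioo (0 : ℝ) 1, Dlower (specMeasure Λ φ) q = 0) ∧
      ∀ q ∈ Ioo (0 : ℝ) 1,
        Dense {ψ : Hspace | Dlower (specMeasure Λ ψ) q = 0} := by
  have hdense :=
    lp.dense_setOf_finite_support (E := fun _ : HIndex ↦ ℂ) (p := 2) ENNReal.ofNat_ne_top
  have hzero : ∀ φ ∈ {f : Hspace | ∃ t : Finset HIndex, ∀ i ∉ t, f i = 0}, ∀ q,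
      Dlower (specMeasure Λ φ) q = 0 := fun φ ⟨t, ht⟩ ↦
    Dlower_specMeasure_eq_zero_of_finite_support Λ ht
  refine ⟨fun ψ δ hδ ↦ ?_, fun q _ ↦ hdense.mono fun φ hφ ↦ hzero φ hφ q⟩
  obtain ⟨φ, hφψ, hφ⟩ := Metric.dense_iff.1 hdense ψ δ hδ
  exact ⟨φ, by rwa [← dist_eq_norm, ← Metric.mem_ball'], fun q _ ↦ hzero φ hφ q⟩

theorem dense_lower_dimension_zero (Λ : ℝ) (hΛ : 0 < Λ) :
    (∀ ψ : Hspace, ∀ δ > (0 : ℝ), ∃ φ : Hspace,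
        ‖ψ - φ‖ < δ ∧ ∀ q ∈ Ioo (0 : ℝ) 1, Dlower (specMeasure Λ φ) q = 0) ∧
      ∀ q ∈ Ioo (0 : ℝ) 1,
        Dense {ψ : Hspace | Dlower (specMeasure Λ ψ) q = 0} :=
  dense_lower_dimension_zero_general Λ
end
end

section
/- Let Λ > 0, λ_n = −Λ/n², let (c_n)_{n≥1} be nonnegative reals with Σ_{n≥1} c_n = 1, and set μ = Σ_{n≥1} c_n δ_{λ_n}. Then for every r ∈ (0,1) there exist constants C > 0 and ε₀ > 0 such that for all ε ∈ (0, ε₀): (1/ε) ∫_ℝ μ((x−ε, x+ε))^r dx ≤ C ε^{−1/3}. -/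
open MeasureTheory Filter Set Topology ENNReal

noncomputable section

/-! Split the atoms of `μ` into the first `N` eigenvalues `A` and the cluster
`B = [λ_{N+1}, 0]`. Since `t ↦ t ^ r` is subadditive for `r ≤ 1`,
`μ(B(x, ε)) ^ r ≤ 1_{A_ε}(x) + 1_{B_ε}(x)` with `A_ε`, `B_ε` the `ε`-thickenings, so the integral is
at most `2Nε + (Λ / (N+1)² + 2ε)`. Taking `N ≈ ε^{-1/3}` balances the two terms at order `ε^{2/3}`. -/

open Metric

section BallMass

variable {X : Type*} [PseudoMetricSpace X] [MeasurableSpace X] {μ : Measure X}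

theorem measure_ball_inter_rpow_le_indicator_thickening (hμ : μ univ ≤ 1) {r : ℝ} (hr : 0 < r)
    (ε : ℝ) (A : Set X) (x : X) :
    μ (ball x ε ∩ A) ^ r ≤ (thickening ε A).indicator 1 x := by
  by_cases hx : x ∈ thickening ε A
  · rw [indicator_of_mem hx, Pi.one_apply]
    exact ENNReal.rpow_le_one ((measure_mono (subset_univ _)).trans hμ) hr.le
  · have hempty : ball x ε ∩ A = ∅ := by
      refine eq_empty_of_forall_notMem fun z hz => hx ?_
      exact mem_thickening_iff.2 ⟨z, hz.2, mem_ball'.1 hz.1⟩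
    rw [hempty, measure_empty, ENNReal.zero_rpow_of_pos hr]
    exact zero_le

theorem measure_ball_le_add_of_measure_compl_union_eq_zero {A B : Set X}
    (hAB : μ (A ∪ B)ᶜ = 0) (x : X) (ε : ℝ) :
    μ (ball x ε) ≤ μ (ball x ε ∩ A) + μ (ball x ε ∩ B) :=
  calc μ (ball x ε) ≤ μ ((ball x ε ∩ A ∪ ball x ε ∩ B) ∪ (A ∪ B)ᶜ) := by
        refine measure_mono fun y hy => ?_
        by_cases hA : y ∈ A
        · exact Or.inl (Or.inl ⟨hy, hA⟩)
        by_cases hB : y ∈ B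
        · exact Or.inl (Or.inr ⟨hy, hB⟩)
        · exact Or.inr fun h => h.elim hA hB
    _ ≤ μ (ball x ε ∩ A ∪ ball x ε ∩ B) + μ (A ∪ B)ᶜ := measure_union_le _ _
    _ = μ (ball x ε ∩ A ∪ ball x ε ∩ B) := by rw [hAB, add_zero]
    _ ≤ μ (ball x ε ∩ A) + μ (ball x ε ∩ B) := measure_union_le _ _

theorem lintegral_measure_ball_rpow_le_thickening [OpensMeasurableSpace X] (ν : Measure X)
    (hμ : μ univ ≤ 1) {A B : Set X} (hAB : μ (A ∪ B)ᶜ = 0) {r : ℝ} (hr0 : 0 < r) (hr1 : r ≤ 1)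
    (ε : ℝ) :
    ∫⁻ x, μ (ball x ε) ^ r ∂ν ≤ ν (thickening ε A) + ν (thickening ε B) := by
  have hpointwise : ∀ x, μ (ball x ε) ^ r ≤
      (thickening ε A).indicator 1 x + (thickening ε B).indicator 1 x := fun x =>
    calc μ (ball x ε) ^ r ≤ (μ (ball x ε ∩ A) + μ (ball x ε ∩ B)) ^ r :=
          ENNReal.rpow_le_rpow (measure_ball_le_add_of_measure_compl_union_eq_zero hAB x ε) hr0.le
      _ ≤ μ (ball x ε ∩ A) ^ r + μ (ball x ε ∩ B) ^ r :=
          ENNReal.rpow_add_le_add_rpow _ _ hr0.le hr1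
      _ ≤ _ := add_le_add (measure_ball_inter_rpow_le_indicator_thickening hμ hr0 ε A x)
          (measure_ball_inter_rpow_le_indicator_thickening hμ hr0 ε B x)
  calc ∫⁻ x, μ (ball x ε) ^ r ∂ν
      ≤ ∫⁻ x, (thickening ε A).indicator 1 x + (thickening ε B).indicator 1 x ∂ν :=
        lintegral_mono hpointwise
    _ = ν (thickening ε A) + ν (thickening ε B) := by
        rw [lintegral_add_left (measurable_one.indicator isOpen_thickening.measurableSet),
          lintegral_indicator_one isOpen_thickening.measurableSet,
          lintegral_indicator_one isOpen_thickening.measurableSet]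

end BallMass

theorem Real.volume_thickening_finset_le (ε : ℝ) (s : Finset ℝ) :
    volume (thickening ε (s : Set ℝ)) ≤ s.card * ENNReal.ofReal (2 * ε) :=
  calc volume (thickening ε (s : Set ℝ)) = volume (⋃ x ∈ s, ball x ε) := by
        rw [thickening_eq_biUnion_ball, Finset.set_biUnion_coe]
    _ ≤ ∑ x ∈ s, volume (ball x ε) := measure_biUnion_finset_le _ _
    _ = s.card * ENNReal.ofReal (2 * ε) := by
        simp only [Real.volume_ball, Finset.sum_const, nsmul_eq_mul]

theorem Real.thickening_Icc_subset_Ioo (ε a b : ℝ) :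
    thickening ε (Icc a b) ⊆ Ioo (a - ε) (b + ε) := by
  intro x hx
  obtain ⟨z, ⟨haz, hzb⟩, hxz⟩ := mem_thickening_iff.1 hx
  rw [Real.dist_eq, abs_lt] at hxz
  constructor <;> linarith

theorem MeasureTheory.Measure.sum_smul_dirac_apply_compl_eq_zero {ι X : Type*} [Countable ι]
    [MeasurableSpace X] [MeasurableSingletonClass X] (w : ι → ℝ≥0∞) {x : ι → X} {S : Set X}
    (hS : ∀ i, x i ∈ S) : Measure.sum (fun i => w i • Measure.dirac (x i)) Sᶜ = 0 := by
  simp [Measure.sum_apply_of_countable, Measure.dirac_apply, hS]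

theorem lam_succ_mem_Icc {Λ : ℝ} (hΛ : 0 ≤ Λ) {N n : ℕ} (hNn : N ≤ n) :
    lam Λ (n + 1) ∈ Icc (-(Λ / ((N : ℝ) + 1) ^ 2)) 0 := by
  have hNn' : (N : ℝ) + 1 ≤ (n : ℝ) + 1 := by exact_mod_cast Nat.succ_le_succ hNn
  rw [lam, neg_div, Nat.cast_succ]
  exact ⟨neg_le_neg (div_le_div_of_nonneg_left hΛ (by positivity) (by gcongr)),
    neg_nonpos.2 (by positivity)⟩

theorem lintegral_sum_smul_dirac_lam_rpow_le {Λ : ℝ} (hΛ : 0 ≤ Λ) (w : ℕ → ℝ≥0∞)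
    (hw : ∑' n, w n ≤ 1) {r : ℝ} (hr0 : 0 < r) (hr1 : r ≤ 1) {ε : ℝ} (hε : 0 ≤ ε) (N : ℕ) :
    ∫⁻ x, (Measure.sum fun n => w n • Measure.dirac (lam Λ (n + 1))) (Ioo (x - ε) (x + ε)) ^ r ≤
      ENNReal.ofReal (N * (2 * ε) + (Λ / ((N : ℝ) + 1) ^ 2 + 2 * ε)) := by
  set A : Finset ℝ := (Finset.range N).image fun n => lam Λ (n + 1)
  set B : Set ℝ := Icc (-(Λ / ((N : ℝ) + 1) ^ 2)) 0
  have hatoms : ∀ n, lam Λ (n + 1) ∈ (A : Set ℝ) ∪ B := by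
    intro n
    rcases lt_or_ge n N with hn | hn
    · exact Or.inl (Finset.mem_coe.2 (Finset.mem_image_of_mem _ (Finset.mem_range.2 hn)))
    · exact Or.inr (lam_succ_mem_Icc hΛ hn)
  have hvolA : volume (thickening ε (A : Set ℝ)) ≤ ENNReal.ofReal (N * (2 * ε)) :=
    calc volume (thickening ε (A : Set ℝ)) ≤ A.card * ENNReal.ofReal (2 * ε) :=
          Real.volume_thickening_finset_le ε A
      _ ≤ N * ENNReal.ofReal (2 * ε) := by
          gcongr
          exact_mod_cast Finset.card_image_le.trans (Finset.card_range N).le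
      _ = ENNReal.ofReal (N * (2 * ε)) := by
          rw [ENNReal.ofReal_mul (Nat.cast_nonneg N), ENNReal.ofReal_natCast]
  have hvolB : volume (thickening ε B) ≤ ENNReal.ofReal (Λ / ((N : ℝ) + 1) ^ 2 + 2 * ε) :=
    calc volume (thickening ε B) ≤ volume (Ioo (-(Λ / ((N : ℝ) + 1) ^ 2) - ε) (0 + ε)) :=
          measure_mono (Real.thickening_Icc_subset_Ioo ε _ _)
      _ = ENNReal.ofReal (Λ / ((N : ℝ) + 1) ^ 2 + 2 * ε) := by
          rw [Real.volume_Ioo]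
          ring_nf
  simp_rw [← Real.ball_eq_Ioo]
  calc _ ≤ volume (thickening ε (A : Set ℝ)) + volume (thickening ε B) :=
        lintegral_measure_ball_rpow_le_thickening volume
          (by simpa using hw) (Measure.sum_smul_dirac_apply_compl_eq_zero w hatoms) hr0 hr1 ε
    _ ≤ _ := by
        rw [ENNReal.ofReal_add (by positivity) (by positivity)]
        exact add_le_add hvolA hvolB

theorem exists_nat_mul_add_div_sq_le {Λ ε : ℝ} (hΛ : 0 ≤ Λ) (hε0 : 0 < ε) (hε1 : ε ≤ 1) :
    ∃ N : ℕ, N * (2 * ε) + (Λ / ((N : ℝ) + 1) ^ 2 + 2 * ε) ≤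
      ε * ((6 + Λ) * ε ^ (-(1 / 3) : ℝ)) := by
  set a : ℝ := ε ^ (-(1 / 3) : ℝ)
  have ha1 : 1 ≤ a := Real.one_le_rpow_of_pos_of_le_one_of_nonpos hε0 hε1 (by norm_num)
  have hcube : a ^ 3 * ε = 1 := by
    rw [← Real.rpow_natCast, ← Real.rpow_mul hε0.le, ← Real.rpow_add_one hε0.ne']
    norm_num
  refine ⟨⌈a⌉₊, ?_⟩
  have hNa : a ≤ ⌈a⌉₊ := Nat.le_ceil a
  have hN2a : (⌈a⌉₊ : ℝ) ≤ 2 * a := by linarith [Nat.ceil_lt_add_one (zero_le_one.trans ha1)]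
  have hcluster : Λ / ((⌈a⌉₊ : ℝ) + 1) ^ 2 ≤ Λ * a * ε :=
    calc Λ / ((⌈a⌉₊ : ℝ) + 1) ^ 2 ≤ Λ / a ^ 2 :=
          div_le_div_of_nonneg_left hΛ (by positivity) (by gcongr; linarith)
      _ = Λ * a * ε := by
          rw [div_eq_iff (by positivity)]
          linear_combination -Λ * hcube
  nlinarith [mul_pos hε0 (zero_lt_one.trans_le ha1)]

theorem hydrogen_L_integral_upper_bound
    (Λ : ℝ) (hΛ : 0 < Λ)
    (c : ℕ → ℝ) (hc : ∀ n, 0 ≤ c n) (hsum : ∑' n : ℕ, c (n + 1) = 1)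
    (μ : Measure ℝ)
    (hμ : μ = Measure.sum fun n : ℕ =>
      ENNReal.ofReal (c (n + 1)) • Measure.dirac (lam Λ (n + 1)))
    (r : ℝ) (hr : r ∈ Ioo (0 : ℝ) 1) :
    ∃ C > (0 : ℝ), ∃ ε₀ > (0 : ℝ), ∀ ε ∈ Ioo (0 : ℝ) ε₀,
      (ENNReal.ofReal ε)⁻¹ * ∫⁻ x : ℝ, μ (Ioo (x - ε) (x + ε)) ^ r ≤
        ENNReal.ofReal (C * ε ^ (-(1 / 3) : ℝ)) := by
  have hsummable : Summable fun n => c (n + 1) := by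
    by_contra h
    rw [tsum_eq_zero_of_not_summable h] at hsum
    exact zero_ne_one hsum
  have hmass : ∑' n, ENNReal.ofReal (c (n + 1)) = 1 := by
    rw [← ENNReal.ofReal_tsum_of_nonneg (fun n => hc _) hsummable, hsum, ENNReal.ofReal_one]
  refine ⟨6 + Λ, by linarith, 1, one_pos, ?_⟩
  rintro ε ⟨hε0, hε1⟩
  obtain ⟨N, hN⟩ := exists_nat_mul_add_div_sq_le hΛ.le hε0 hε1.le
  have hε : ENNReal.ofReal ε ≠ 0 := (ENNReal.ofReal_pos.2 hε0).ne'
  subst hμ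
  calc (ENNReal.ofReal ε)⁻¹ * ∫⁻ x, _ ^ r
      ≤ (ENNReal.ofReal ε)⁻¹ * ENNReal.ofReal (ε * ((6 + Λ) * ε ^ (-(1 / 3) : ℝ))) := by
        gcongr
        exact (lintegral_sum_smul_dirac_lam_rpow_le hΛ.le _ hmass.le hr.1 hr.2.le hε0.le N).trans
          (ENNReal.ofReal_le_ofReal hN)
    _ = ENNReal.ofReal ((6 + Λ) * ε ^ (-(1 / 3) : ℝ)) := by
        rw [ENNReal.ofReal_mul hε0.le, ← mul_assoc, ENNReal.inv_mul_cancel hε ENNReal.ofReal_ne_top,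
          one_mul]
end
end

section
/- Let Λ > 0, λ_n = −Λ/n², let (c_n)_{n≥1} be nonnegative reals with Σ_{n≥1} c_n = 1, and set μ = Σ_{n≥1} c_n δ_{λ_n}. Then for every q ∈ (0,1): limsup_{ε↓0} ln( ε^{−1} ∫_ℝ μ((x−ε, x+ε))^q dx ) / ((q−1) ln ε) ≤ 1/(3(1−q)). -/
open MeasureTheory Filter Set Topology ENNReal

noncomputable section

/-! Since `μ` has mass one and lives on the levels `λₙ`, the integrand `μ(B(x, ε))^q` is at most
the indicator of the `ε`-neighbourhood of `{λₙ}`. At most `√Λ ε^(-1/3)` levels lie below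
`-ε^(2/3)` and the others lie in `(-ε^(2/3), 0]`, so this neighbourhood has Lebesgue measure
`O(ε^(2/3))`. Hence `ε⁻¹ ∫ μ(B(x, ε))^q dx = O(ε^(-1/3))`, and dividing its logarithm by
`(q - 1) ln ε` gives `1 / (3 (1 - q))` in the limit. -/

section BallMass

variable {X : Type*} [PseudoMetricSpace X] [MeasurableSpace X] [OpensMeasurableSpace X]

theorem lintegral_measure_ball_rpow_le {μ ν : Measure X} {S : Set X} (hS : μ Sᶜ = 0)
    {q : ℝ} (hq : 0 < q) (ε : ℝ) :
    ∫⁻ x, μ (Metric.ball x ε) ^ q ∂ν ≤ μ univ ^ q * ν (Metric.thickening ε S) := by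
  have hpointwise : ∀ x, μ (Metric.ball x ε) ^ q ≤
      (Metric.thickening ε S).indicator (fun _ => μ univ ^ q) x := by
    intro x
    by_cases hx : x ∈ Metric.thickening ε S
    · rw [indicator_of_mem hx]
      exact ENNReal.rpow_le_rpow (measure_mono (subset_univ _)) hq.le
    · have hball : Metric.ball x ε ⊆ Sᶜ := fun y hy hyS =>
        hx (Metric.mem_thickening_iff.2 ⟨y, hyS, by rw [dist_comm]; exact hy⟩)
      rw [measure_mono_null hball hS, ENNReal.zero_rpow_of_pos hq]
      exact zero_le
  calc ∫⁻ x, μ (Metric.ball x ε) ^ q ∂ν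
      ≤ ∫⁻ x, (Metric.thickening ε S).indicator (fun _ => μ univ ^ q) x ∂ν :=
        lintegral_mono hpointwise
    _ = μ univ ^ q * ν (Metric.thickening ε S) :=
        lintegral_indicator_const Metric.isOpen_thickening.measurableSet _

end BallMass

section DiracSum

variable {X ι : Type*} [MeasurableSpace X]

theorem measure_sum_smul_dirac_compl_range [Countable ι] [MeasurableSingletonClass X]
    (w : ι → ℝ≥0∞) (p : ι → X) :
    (Measure.sum fun i => w i • Measure.dirac (p i)) (range p)ᶜ = 0 :=
  Measure.sum_apply_eq_zero.2 fun i => by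
    rw [Measure.smul_apply, Measure.dirac_apply, indicator_of_notMem (by simp), smul_zero]

theorem measure_sum_ofReal_smul_dirac_univ {c : ι → ℝ} (hc : ∀ i, 0 ≤ c i) (hs : Summable c)
    (p : ι → X) :
    (Measure.sum fun i => ENNReal.ofReal (c i) • Measure.dirac (p i)) univ =
      ENNReal.ofReal (∑' i, c i) := by
  simp only [Measure.sum_apply _ MeasurableSet.univ, Measure.smul_apply, measure_univ,
    smul_eq_mul, mul_one]
  exact (ENNReal.ofReal_tsum_of_nonneg hc hs).symm

end DiracSum

section HydrogenLevels

variable {Λ : ℝ}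

theorem lam_mem_Ioc_of_floor_le (hΛ : 0 ≤ Λ) {a : ℝ} (ha : 0 < a) {n : ℕ}
    (hn : ⌊√Λ / a⌋₊ ≤ n) : lam Λ (n + 1) ∈ Ioc (-a ^ 2) 0 := by
  have hlt : √Λ < (n + 1 : ℕ) * a := by
    rw [← div_lt_iff₀ ha]
    exact (Nat.lt_floor_add_one _).trans_le (by exact_mod_cast Nat.succ_le_succ hn)
  have hsq : Λ < ((n + 1 : ℕ) : ℝ) ^ 2 * a ^ 2 := by
    rw [← mul_pow, ← Real.sq_sqrt hΛ]
    exact pow_lt_pow_left₀ hlt (Real.sqrt_nonneg _) two_ne_zero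
  unfold lam
  constructor
  · rw [neg_div, neg_lt_neg_iff, div_lt_iff₀ (by positivity)]
    linarith
  · exact div_nonpos_of_nonpos_of_nonneg (neg_nonpos.2 hΛ) (sq_nonneg _)

theorem thickening_range_lam_subset (hΛ : 0 ≤ Λ) {a : ℝ} (ha : 0 < a) (ε : ℝ) :
    Metric.thickening ε (range fun n : ℕ => lam Λ (n + 1)) ⊆
      Ioo (-a ^ 2 - ε) ε ∪ ⋃ n ∈ Finset.range ⌊√Λ / a⌋₊, Metric.ball (lam Λ (n + 1)) ε := by
  intro x hx
  obtain ⟨_, ⟨n, rfl⟩, hxn⟩ := Metric.mem_thickening_iff.1 hx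
  by_cases hn : n < ⌊√Λ / a⌋₊
  · exact Or.inr (mem_biUnion (Finset.mem_range.2 hn) hxn)
  · obtain ⟨hlo, hhi⟩ := lam_mem_Ioc_of_floor_le hΛ ha (not_lt.1 hn)
    rw [Real.dist_eq, abs_lt] at hxn
    exact Or.inl ⟨by linarith, by linarith⟩

theorem volume_thickening_range_lam_le (hΛ : 0 ≤ Λ) {a : ℝ} (ha0 : 0 < a) (ha1 : a ≤ 1) :
    volume (Metric.thickening (a ^ 3) (range fun n : ℕ => lam Λ (n + 1))) ≤
      ENNReal.ofReal ((2 * √Λ + 3) * a ^ 2) := by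
  set N := ⌊√Λ / a⌋₊
  have hN : (N : ℝ) * a ≤ √Λ := (le_div_iff₀ ha0).1 (Nat.floor_le (by positivity))
  calc volume (Metric.thickening (a ^ 3) (range fun n : ℕ => lam Λ (n + 1)))
      ≤ volume (Ioo (-a ^ 2 - a ^ 3) (a ^ 3)) +
          ∑ n ∈ Finset.range N, volume (Metric.ball (lam Λ (n + 1)) (a ^ 3)) :=
        (measure_mono (thickening_range_lam_subset hΛ ha0 _)).trans <|
          (measure_union_le _ _).trans (by gcongr; exact measure_biUnion_finset_le _ _)
    _ = ENNReal.ofReal (a ^ 2 + 2 * a ^ 3 + N * (2 * a ^ 3)) := by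
        simp only [Real.volume_Ioo, Real.volume_ball, Finset.sum_const, Finset.card_range,
          nsmul_eq_mul]
        rw [← ENNReal.ofReal_natCast, ← ENNReal.ofReal_mul (Nat.cast_nonneg _),
          ← ENNReal.ofReal_add (by ring_nf; positivity) (by positivity)]
        ring_nf
    _ ≤ ENNReal.ofReal ((2 * √Λ + 3) * a ^ 2) := by
        refine ENNReal.ofReal_le_ofReal ?_
        have ha3 : a ^ 3 ≤ a ^ 2 := pow_le_pow_of_le_one ha0.le ha1 (by norm_num)
        nlinarith [mul_le_mul_of_nonneg_right hN (by positivity : (0 : ℝ) ≤ 2 * a ^ 2)]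

theorem volume_thickening_range_lam_le_rpow (hΛ : 0 ≤ Λ) {ε : ℝ} (hε0 : 0 < ε) (hε1 : ε ≤ 1) :
    volume (Metric.thickening ε (range fun n : ℕ => lam Λ (n + 1))) ≤
      ENNReal.ofReal ((2 * √Λ + 3) * ε ^ (2 / 3 : ℝ)) := by
  have ha0 : 0 < ε ^ (1 / 3 : ℝ) := Real.rpow_pos_of_pos hε0 _
  have ha1 : ε ^ (1 / 3 : ℝ) ≤ 1 := Real.rpow_le_one hε0.le hε1 (by norm_num)
  have hpow : ∀ k : ℕ, (ε ^ (1 / 3 : ℝ)) ^ k = ε ^ (k / 3 : ℝ) := fun k => by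
    rw [← Real.rpow_natCast, ← Real.rpow_mul hε0.le]; ring_nf
  have h := volume_thickening_range_lam_le hΛ ha0 ha1
  rwa [hpow, hpow, show ((3 : ℕ) / 3 : ℝ) = 1 by norm_num, Real.rpow_one] at h

end HydrogenLevels

/-- In `ℝ`, `limsup f l` falls back to the junk value `0` when `f` is not cobounded above,
whence the hypothesis `0 ≤ L`. -/
theorem limsup_le_of_eventually_le_of_tendsto {α : Type*} {l : Filter α} {f g : α → ℝ} {L : ℝ}
    (hL : 0 ≤ L) (hfg : f ≤ᶠ[l] g) (hg : Tendsto g l (𝓝 L)) : limsup f l ≤ L := by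
  have hev : ∀ b, L < b → ∀ᶠ x in l, f x ≤ b := fun b hb => by
    filter_upwards [hfg, hg.eventually_lt_const hb] with x hfx hgx
    exact hfx.trans hgx.le
  rw [limsup_eq]
  by_cases hbdd : BddBelow {b : ℝ | ∀ᶠ x in l, f x ≤ b}
  · exact le_of_forall_gt_imp_ge_of_dense fun b hb => csInf_le hbdd (hev b hb)
  · rwa [Real.sInf_of_not_bddBelow hbdd]

theorem limsup_log_div_log_le_of_le_rpow {T : ℝ → ℝ} {C α q : ℝ} (hC : 1 ≤ C) (hα : 0 ≤ α)
    (hq : q < 1) (hT : ∀ᶠ ε in 𝓝[>] 0, 0 ≤ T ε ∧ T ε ≤ C * ε ^ (-α)) :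
    limsup (fun ε => Real.log (T ε) / ((q - 1) * Real.log ε)) (𝓝[>] 0) ≤ α / (1 - q) := by
  have h1q : 0 < 1 - q := sub_pos.2 hq
  refine limsup_le_of_eventually_le_of_tendsto (div_nonneg hα h1q.le)
    (g := fun ε => Real.log C / ((1 - q) * -Real.log ε) + α / (1 - q)) ?_ ?_
  · filter_upwards [hT, Ioo_mem_nhdsGT one_pos] with ε ⟨hT0, hTC⟩ ⟨hε0, hε1⟩
    have hlog : Real.log ε < 0 := Real.log_neg hε0 hε1
    have hbound : 1 ≤ C * ε ^ (-α) :=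
      one_le_mul_of_one_le_of_one_le hC (Real.one_le_rpow_of_pos_of_le_one_of_nonpos hε0 hε1.le
        (neg_nonpos.2 hα))
    have hlogT : Real.log (T ε) ≤ Real.log C - α * Real.log ε := by
      rw [sub_eq_add_neg, ← neg_mul, ← Real.log_rpow hε0, ← Real.log_mul (by positivity)
        (by positivity)]
      rcases hT0.eq_or_lt with h | h
      · rw [← h, Real.log_zero]
        exact Real.log_nonneg hbound
      · exact Real.log_le_log h hTC
    calc Real.log (T ε) / ((q - 1) * Real.log ε)
        ≤ (Real.log C - α * Real.log ε) / ((q - 1) * Real.log ε) :=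
          div_le_div_of_nonneg_right hlogT (mul_nonneg_of_nonpos_of_nonpos (by linarith) hlog.le)
      _ = Real.log C / ((1 - q) * -Real.log ε) + α / (1 - q) := by
          field_simp [hlog.ne, h1q.ne', sub_ne_zero.2 hq.ne]
          ring
  · have hden : Tendsto (fun ε => (1 - q) * -Real.log ε) (𝓝[>] 0) atTop :=
      (tendsto_neg_atBot_atTop.comp Real.tendsto_log_nhdsGT_zero).const_mul_atTop h1q
    simpa using (tendsto_const_nhds.div_atTop hden).add_const (α / (1 - q))

theorem toReal_inv_ofReal_mul_le_rpow {I : ℝ≥0∞} {C ε β : ℝ} (hC : 0 ≤ C) (hε : 0 < ε)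
    (hI : I ≤ ENNReal.ofReal (C * ε ^ β)) :
    ((ENNReal.ofReal ε)⁻¹ * I).toReal ≤ C * ε ^ (β - 1) := by
  rw [ENNReal.toReal_mul, ENNReal.toReal_inv, ENNReal.toReal_ofReal hε.le,
    Real.rpow_sub_one hε.ne', mul_div_assoc', inv_mul_eq_div, div_le_div_iff_of_pos_right hε]
  exact ENNReal.toReal_le_of_le_ofReal (by positivity) hI

theorem hydrogen_upper_dimension_alt_formula_bound
    (Λ : ℝ) (hΛ : 0 < Λ)
    (c : ℕ → ℝ) (hc : ∀ n, 0 ≤ c n) (hsum : ∑' n : ℕ, c (n + 1) = 1)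
    (μ : Measure ℝ)
    (hμ : μ = Measure.sum fun n : ℕ =>
      ENNReal.ofReal (c (n + 1)) • Measure.dirac (lam Λ (n + 1)))
    (q : ℝ) (hq : q ∈ Ioo (0 : ℝ) 1) :
    limsup (fun ε : ℝ =>
        Real.log ((ENNReal.ofReal ε)⁻¹ * ∫⁻ x : ℝ, μ (Ioo (x - ε) (x + ε)) ^ q).toReal /
          ((q - 1) * Real.log ε)) (𝓝[>] 0) ≤ 1 / (3 * (1 - q)) := by
  have hsummable : Summable fun n => c (n + 1) := by
    by_contra h
    rw [tsum_eq_zero_of_not_summable h] at hsum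
    exact zero_ne_one hsum
  have hμS : μ (range fun n : ℕ => lam Λ (n + 1))ᶜ = 0 := by
    rw [hμ]
    exact measure_sum_smul_dirac_compl_range _ _
  have hμ1 : μ univ = 1 := by
    rw [hμ, measure_sum_ofReal_smul_dirac_univ (fun n => hc _) hsummable, hsum, ENNReal.ofReal_one]
  rw [← div_div]
  refine limsup_log_div_log_le_of_le_rpow (C := 2 * √Λ + 3)
    (by linarith [Real.sqrt_nonneg Λ]) (by norm_num) hq.2 ?_
  filter_upwards [Ioo_mem_nhdsGT one_pos] with ε ⟨hε0, hε1⟩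
  refine ⟨ENNReal.toReal_nonneg, ?_⟩
  have hI : ∫⁻ x : ℝ, μ (Ioo (x - ε) (x + ε)) ^ q ≤
      ENNReal.ofReal ((2 * √Λ + 3) * ε ^ (2 / 3 : ℝ)) := by
    simp_rw [← Real.ball_eq_Ioo]
    calc ∫⁻ x : ℝ, μ (Metric.ball x ε) ^ q
        ≤ μ univ ^ q * volume (Metric.thickening ε (range fun n : ℕ => lam Λ (n + 1))) :=
          lintegral_measure_ball_rpow_le hμS hq.1 ε
      _ ≤ _ := by
          rw [hμ1, ENNReal.one_rpow, one_mul]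
          exact volume_thickening_range_lam_le_rpow hΛ.le hε0 hε1.le
  convert toReal_inv_ofReal_mul_le_rpow (by positivity) hε0 hI using 3
  norm_num
end
end
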